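/- arXiv:2302.01748 — 4 statements merged into one kernel-verified Lean document; each statement's English description precedes it below -/
import Mathlib

section
/- Let Q and T be strings and A the set of all MEMs between Q and T. The length of an anchor-restricted LCS with respect to A equals the length of an (unrestricted) LCS of Q and T. -/
variable {α : Type*}

/-- `(x, i, κ)` is an exact match between strings `Q` and `T` (0-indexed):
`Q[x..x+κ-1] = T[i..i+κ-1]`. -/
def IsExactMatch (Q T : List α) (x i κ : ℕ) : Prop :=
  1 ≤ κ ∧ x + κ ≤ Q.length ∧ i + κ ≤ T.length ∧
    ∀ d < κ, Q[x + d]? = T[i + d]?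

/-- `(x, i, κ)` is a maximal exact match (MEM): an exact match that cannot be
extended to the left nor to the right. -/
def IsMEM (Q T : List α) (x i κ : ℕ) : Prop :=
  IsExactMatch Q T x i κ ∧
    (x = 0 ∨ i = 0 ∨ Q[x - 1]? ≠ T[i - 1]?) ∧
    (x + κ = Q.length ∨ i + κ = T.length ∨ Q[x + κ]? ≠ T[i + κ]?)

/-- Anchor `(x, i, κ)` supports the character match `(y, j)` at the same offset. -/
def Supports (x i κ y j : ℕ) : Prop :=
  x ≤ y ∧ y < x + κ ∧ i ≤ j ∧ j < i + κ ∧ y - x = j - i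

/-- `ys, js` exhibit a common subsequence of `Q` and `T` of length `c`. -/
def IsCommonSubseq (Q T : List α) (c : ℕ) (ys js : Fin c → ℕ) : Prop :=
  StrictMono ys ∧ StrictMono js ∧
    ∀ l, ys l < Q.length ∧ js l < T.length ∧ Q[ys l]? = T[js l]?

/-- There is a common subsequence of length `c` each of whose character matches is
supported by some anchor of `A` at the same offset. -/
def IsRestrictedCS (A : Set (ℕ × ℕ × ℕ)) (Q T : List α) (c : ℕ) : Prop :=
  ∃ ys js : Fin c → ℕ, IsCommonSubseq Q T c ys js ∧
    ∀ l, ∃ m ∈ A, Supports m.1 m.2.1 m.2.2 (ys l) (js l)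

lemma exists_MEM_support (Q T : List α) {y j : ℕ} (hy : y < Q.length) (hj : j < T.length)
    (h : Q[y]? = T[j]?) :
    ∃ x i κ, IsMEM Q T x i κ ∧ Supports x i κ y j := by
  set S : Set ℕ := {d | d ≤ y ∧ d ≤ j ∧ ∀ e ≤ d, Q[y - e]? = T[j - e]?} with hSdef
  have hS0 : 0 ∈ S := ⟨Nat.zero_le _, Nat.zero_le _, by
    intro e he; simp only [Nat.le_zero.mp he, Nat.sub_zero]; exact h⟩
  have hSbdd : BddAbove S := ⟨y, fun d hd => hd.1⟩
  set a := sSup S with ha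
  have haS : a ∈ S := Nat.sSup_mem ⟨0, hS0⟩ hSbdd
  set S' : Set ℕ := {d | y + d < Q.length ∧ j + d < T.length ∧
      ∀ e ≤ d, Q[y + e]? = T[j + e]?} with hS'def
  have hS'0 : 0 ∈ S' := ⟨by simpa, by simpa, by
    intro e he; simp only [Nat.le_zero.mp he, Nat.add_zero]; exact h⟩
  have hS'bdd : BddAbove S' :=
    ⟨Q.length, fun d hd => le_of_lt (lt_of_le_of_lt (Nat.le_add_left _ _) hd.1)⟩
  set b := sSup S' with hb
  have hbS : b ∈ S' := Nat.sSup_mem ⟨0, hS'0⟩ hS'bdd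
  obtain ⟨hay, haj, hamatch⟩ := haS
  obtain ⟨hby, hbj, hbmatch⟩ := hbS
  refine ⟨y - a, j - a, a + b + 1, ⟨⟨by omega, by omega, by omega, ?_⟩, ?_, ?_⟩,
    by omega, by omega, by omega, by omega, by omega⟩
  · intro d hd
    rcases le_or_gt d a with hda | hda
    · have h1 : y - a + d = y - (a - d) := by omega
      have h2 : j - a + d = j - (a - d) := by omega
      rw [h1, h2]
      exact hamatch _ (by omega)
    · have h1 : y - a + d = y + (d - a) := by omega
      have h2 : j - a + d = j + (d - a) := by omega
      rw [h1, h2]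
      exact hbmatch _ (by omega)
  · by_cases h1 : y - a = 0
    · exact Or.inl h1
    by_cases h2 : j - a = 0
    · exact Or.inr (Or.inl h2)
    refine Or.inr (Or.inr fun heq => ?_)
    have hmem : a + 1 ∈ S := by
      refine ⟨by omega, by omega, fun e he => ?_⟩
      rcases le_or_gt e a with hea | hea
      · exact hamatch _ hea
      · have he1 : e = a + 1 := by omega
        subst he1
        have g1 : y - (a + 1) = y - a - 1 := by omega
        have g2 : j - (a + 1) = j - a - 1 := by omega
        rw [g1, g2]; exact heq
    have := le_csSup hSbdd hmem
    omega
  · by_cases h1 : y - a + (a + b + 1) = Q.length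
    · exact Or.inl h1
    by_cases h2 : j - a + (a + b + 1) = T.length
    · exact Or.inr (Or.inl h2)
    refine Or.inr (Or.inr fun heq => ?_)
    have e1 : y - a + (a + b + 1) = y + (b + 1) := by omega
    have e2 : j - a + (a + b + 1) = j + (b + 1) := by omega
    rw [e1] at h1 heq
    rw [e2] at h2 heq
    have hmem : b + 1 ∈ S' := by
      refine ⟨by omega, by omega, fun e he => ?_⟩
      rcases le_or_gt e b with heb | heb
      · exact hbmatch _ heb
      · have he1 : e = b + 1 := by omega
        subst he1; exact heq
    have := le_csSup hS'bdd hmem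
    omega

/-- When the anchor set consists of all MEMs between `Q` and `T`, the length of an
anchor-restricted LCS equals the length of an (unrestricted) LCS of `Q` and `T`. -/
theorem restrictedLCS_eq_LCS_of_MEM_anchors (Q T : List α) :
    sSup {c | IsRestrictedCS {m | IsMEM Q T m.1 m.2.1 m.2.2} Q T c} =
      sSup {c | ∃ ys js : Fin c → ℕ, IsCommonSubseq Q T c ys js} := by
  congr 1
  ext c
  constructor
  · rintro ⟨ys, js, hcs, -⟩
    exact ⟨ys, js, hcs⟩
  · rintro ⟨ys, js, hcs⟩
    refine ⟨ys, js, hcs, fun l => ?_⟩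
    obtain ⟨hy, hj, hm⟩ := hcs.2.2 l
    obtain ⟨x, i, κ, hmem, hsup⟩ := exists_MEM_support Q T hy hj hm
    exact ⟨(x, i, κ), hmem, hsup⟩
end

section
/- Let G = (V,E,ℓ) be a labeled DAG with nonempty node labels and Q a query string. Every MEM ([x..y], (i,P,j)) between Q and G, where P = v_1...v_p, decomposes into a perfect chain of node MEMs: there exist positions x = i_1 < i_2 < ... < i_{p+1} = y+1 in Q such that ([i_1..i_2-1],(i,v_1,‖v_1‖)), ([i_l..i_{l+1}-1],(1,v_l,‖v_l‖)) for 1 < l < p, and ([i_p..i_{p+1}-1],(1,v_p,j)) are all node MEMs, and their concatenation equals ([x..y],(i,P,j)). -/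
variable {V α : Type*}

/-- The string spelled by the graph substring `(i, P, j)` (0-indexed): for
`P = v₁ ⋯ v_k` it is `ℓ(v₁)[i..] · ℓ(v₂) ⋯ ℓ(v_{k-1}) · ℓ(v_k)[..j]`. -/
def spell (ℓ : V → List α) : ℕ → List V → ℕ → List α
  | _, [], _ => []
  | i, [v], j => ((ℓ v).take (j + 1)).drop i
  | i, v :: u :: rest, j => (ℓ v).drop i ++ spell ℓ 0 (u :: rest) j

/-- `([x..y], (i, P, j))` is an exact match between the string `Q` and the
labeled graph `(V, E, ℓ)` (all indices 0-based): `P` is a nonempty path of the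
graph and `Q[x..y]` equals the string spelled by the graph substring `(i, P, j)`. -/
def IsGraphMatch [Inhabited V] (E : V → V → Prop) (ℓ : V → List α) (Q : List α)
    (x y i : ℕ) (P : List V) (j : ℕ) : Prop :=
  P ≠ [] ∧ P.Chain' E ∧ i < (ℓ P.headI).length ∧ j < (ℓ (P.getLastD default)).length ∧
    x ≤ y ∧ y < Q.length ∧ (Q.take (y + 1)).drop x = spell ℓ i P j

/-- The left-extension of the graph substring `(i, P, j)`. -/
def leftext (E : V → V → Prop) (ℓ : V → List α) (i : ℕ) (P : List V) : Set α :=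
  match P with
  | [] => ∅
  | v :: _ =>
    if 0 < i then {a | (ℓ v)[i - 1]? = some a}
    else {a | ∃ u, E u v ∧ (ℓ u).getLast? = some a}

/-- The right-extension of the graph substring `(i, P, j)`. -/
def rightext (E : V → V → Prop) (ℓ : V → List α) (P : List V) (j : ℕ) : Set α :=
  match P.getLast? with
  | none => ∅
  | some w =>
    if j + 1 < (ℓ w).length then {a | (ℓ w)[j + 1]? = some a}
    else {a | ∃ u, E w u ∧ (ℓ u)[0]? = some a}

/-- Left-maximality of a graph match: `x = 0`, or the left-extension is empty,
or `Q[x-1]` is not in the left-extension. -/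
def LeftMax (E : V → V → Prop) (ℓ : V → List α) (Q : List α) (x i : ℕ)
    (P : List V) : Prop :=
  x = 0 ∨ ∀ a ∈ leftext E ℓ i P, Q[x - 1]? ≠ some a

/-- Right-maximality of a graph match. -/
def RightMax (E : V → V → Prop) (ℓ : V → List α) (Q : List α) (y : ℕ)
    (P : List V) (j : ℕ) : Prop :=
  y + 1 = Q.length ∨ ∀ a ∈ rightext E ℓ P j, Q[y + 1]? ≠ some a

/-- A MEM between `Q` and the graph: a match that is left-maximal or has a
non-singleton left-extension, and right-maximal or has a non-singleton
right-extension. -/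
def IsGraphMEM [Inhabited V] (E : V → V → Prop) (ℓ : V → List α) (Q : List α)
    (x y i : ℕ) (P : List V) (j : ℕ) : Prop :=
  IsGraphMatch E ℓ Q x y i P j ∧
    (LeftMax E ℓ Q x i P ∨ ¬ (leftext E ℓ i P).Subsingleton) ∧
    (RightMax E ℓ Q y P j ∨ ¬ (rightext E ℓ P j).Subsingleton)

/-- A node MEM: an exact match `Q[x..y] = ℓ(v)[i..j]` inside a single node `v`
that is maximal in the string sense or touches the node-label boundary. -/
def IsNodeMEM (Q : List α) (ℓ : V → List α) (x y i : ℕ) (v : V) (j : ℕ) : Prop :=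
  i ≤ j ∧ j < (ℓ v).length ∧ x ≤ y ∧ y < Q.length ∧ y - x = j - i ∧
    (Q.take (y + 1)).drop x = ((ℓ v).take (j + 1)).drop i ∧
    (x = 0 ∨ i = 0 ∨ Q[x - 1]? ≠ (ℓ v)[i - 1]?) ∧
    (y + 1 = Q.length ∨ j + 1 = (ℓ v).length ∨ Q[y + 1]? ≠ (ℓ v)[j + 1]?)

/-- Acyclicity of the edge relation (`G` is a DAG). -/
def IsDAG (E : V → V → Prop) : Prop := ∀ v, ¬ Relation.TransGen E v v

/-! The spelled string of `(i, v :: P, j)` is `ℓ(v)[i..] ++ spell(0, P, j)`, so the matched window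
of `Q` splits at `x + ‖v‖ - i` into a match inside `v` that runs to the label end and a match of
`(0, P, j)`; peeling off one node at a time gives the chain, and nonempty labels make every cut a
strict step. Every piece starts at offset `0` or ends at its label end except at the two outer
boundaries, and there the extension of the graph match lies inside a node, hence is a single
character, so the graph MEM's maximality is string maximality. -/

open Matrix (vecCons)

theorem List.drop_take_eq_append {Q A B : List α} {x n : ℕ} (hxn : x ≤ n)
    (h : (Q.take n).drop x = A ++ B) :
    (Q.take (x + A.length)).drop x = A ∧ (Q.take n).drop (x + A.length) = B := by
  have hA : x + A.length ≤ n := by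
    have := congrArg List.length h
    simp only [List.length_drop, List.length_take, List.length_append] at this
    omega
  constructor
  · rw [← min_eq_left hA, ← List.take_take, ← List.take_drop, h, List.take_left]
  · rw [← List.drop_drop, h, List.drop_left]

section Spell

variable (ℓ : V → List α)

theorem spell_cons_cons (i j : ℕ) (v u : V) (t : List V) :
    spell ℓ i (v :: u :: t) j = (ℓ v).drop i ++ spell ℓ 0 (u :: t) j := rfl

theorem spell_zero_ne_nil (hlab : ∀ v, ℓ v ≠ []) (j : ℕ) :
    ∀ (v : V) (t : List V), spell ℓ 0 (v :: t) j ≠ []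
  | v, [] => by simpa [spell] using hlab v
  | v, u :: t => by simp [spell_cons_cons, hlab v]

end Spell

def IsNodeMatch (Q : List α) (ℓ : V → List α) (x y i : ℕ) (v : V) (j : ℕ) : Prop :=
  i ≤ j ∧ j < (ℓ v).length ∧ x ≤ y ∧ y < Q.length ∧ y - x = j - i ∧
    (Q.take (y + 1)).drop x = ((ℓ v).take (j + 1)).drop i

section NodeMatch

variable {Q : List α} {ℓ : V → List α} {x y i j : ℕ} {v : V}

theorem isNodeMatch_of_eq (hj : j < (ℓ v).length) (hxy : x ≤ y) (hy : y < Q.length)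
    (h : (Q.take (y + 1)).drop x = ((ℓ v).take (j + 1)).drop i) :
    IsNodeMatch Q ℓ x y i v j := by
  have := congrArg List.length h
  simp only [List.length_drop, List.length_take] at this
  exact ⟨by omega, hj, hxy, hy, by omega, h⟩

theorem IsNodeMatch.isNodeMEM (h : IsNodeMatch Q ℓ x y i v j)
    (hleft : x = 0 ∨ i = 0 ∨ Q[x - 1]? ≠ (ℓ v)[i - 1]?)
    (hright : y + 1 = Q.length ∨ j + 1 = (ℓ v).length ∨ Q[y + 1]? ≠ (ℓ v)[j + 1]?) :
    IsNodeMEM Q ℓ x y i v j :=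
  let ⟨hij, hj, hxy, hy, hlen, heq⟩ := h
  ⟨hij, hj, hxy, hy, hlen, heq, hleft, hright⟩

end NodeMatch

def IsNodeMatchChain (Q : List α) (ℓ : V → List α) (vs : List V) (i j : ℕ)
    (pos : Fin (vs.length + 1) → ℕ) : Prop :=
  StrictMono pos ∧ ∀ l : Fin vs.length,
    IsNodeMatch Q ℓ (pos l.castSucc) (pos l.succ - 1) (if (l : ℕ) = 0 then i else 0) (vs.get l)
      (if (l : ℕ) = vs.length - 1 then j else (ℓ (vs.get l)).length - 1)

section NodeMatchChain

variable {Q : List α} {ℓ : V → List α} {x y i j : ℕ} {v : V}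

theorem isNodeMatchChain_singleton (h : IsNodeMatch Q ℓ x y i v j) :
    IsNodeMatchChain Q ℓ [v] i j ![x, y + 1] := by
  refine ⟨StrictMono.vecCons (Subsingleton.strictMono (α := Fin 1) _)
    (by simpa using Nat.lt_succ_of_le h.2.2.1), fun l => ?_⟩
  obtain rfl : l = 0 := Fin.fin_one_eq_zero l
  simpa using h

theorem IsNodeMatchChain.cons {u : V} {t : List V} {pos : Fin (t.length + 2) → ℕ}
    (h : IsNodeMatchChain Q ℓ (u :: t) 0 j pos) (hx : x < pos 0)
    (hv : IsNodeMatch Q ℓ x (pos 0 - 1) i v ((ℓ v).length - 1)) :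
    IsNodeMatchChain Q ℓ (v :: u :: t) i j (vecCons x pos) := by
  refine ⟨h.1.vecCons hx, Fin.cases ?_ fun l => ?_⟩
  · simpa using hv
  · simpa using h.2 l

end NodeMatchChain

theorem exists_isNodeMatchChain_of_eq_spell {Q : List α} {ℓ : V → List α}
    (hlab : ∀ v, ℓ v ≠ []) {y j : ℕ} (hy : y < Q.length) :
    ∀ (t : List V) (v : V) (x i : ℕ), i < (ℓ v).length →
      j < (ℓ ((v :: t).getLast (List.cons_ne_nil v t))).length → x ≤ y →
      (Q.take (y + 1)).drop x = spell ℓ i (v :: t) j →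
      ∃ pos, IsNodeMatchChain Q ℓ (v :: t) i j pos ∧ pos 0 = x ∧
        pos (Fin.last _) = y + 1
  | [], v, x, i, _, hj, hxy, h =>
    ⟨![x, y + 1], isNodeMatchChain_singleton (isNodeMatch_of_eq hj hxy hy h), rfl, rfl⟩
  | u :: t, v, x, i, hi, hj, hxy, h => by
    rw [spell_cons_cons] at h
    set x' := x + ((ℓ v).drop i).length with hx'
    obtain ⟨hfirst, hrest⟩ := List.drop_take_eq_append (by omega) h
    have hx'y : x' ≤ y := by
      have hlen := congrArg List.length h
      have := List.length_pos_iff.mpr (spell_zero_ne_nil ℓ hlab j u t)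
      simp only [List.length_drop, List.length_take, List.length_append] at hlen
      rw [hx', List.length_drop]
      omega
    obtain ⟨pos, hchain, h0, hlast⟩ :=
      exists_isNodeMatchChain_of_eq_spell hlab hy t u x' 0
        (List.length_pos_iff.mpr (hlab u)) (by rwa [List.getLast_cons_cons] at hj) hx'y hrest
    have hxx' : x < x' := by simp only [hx', List.length_drop]; omega
    refine ⟨vecCons x pos, hchain.cons (h0 ▸ hxx') ?_, rfl, hlast⟩
    rw [h0]
    refine isNodeMatch_of_eq (by omega) (by omega) (by omega) ?_
    rw [Nat.sub_add_cancel (by omega), Nat.sub_add_cancel (by omega), List.take_length]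
    exact hfirst

section Maximality

variable {E : V → V → Prop} {ℓ : V → List α} {Q : List α} {x y i j : ℕ}

theorem leftext_cons_of_pos {v : V} {P : List V} (hi : 0 < i) :
    leftext E ℓ i (v :: P) = {a | (ℓ v)[i - 1]? = some a} := by
  simp [leftext, hi]

theorem rightext_of_getLast?_eq {P : List V} {w : V} (hw : P.getLast? = some w)
    (hj : j + 1 < (ℓ w).length) :
    rightext E ℓ P j = {a | (ℓ w)[j + 1]? = some a} := by
  simp [rightext, hw, hj]

theorem subsingleton_setOf_eq_some (o : Option α) : {a | o = some a}.Subsingleton :=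
  fun _ ha _ hb => Option.some.inj (ha.symm.trans hb)

theorem nodeLeftMaximal_of_graphMEM {v : V} {P : List V} (hi : i < (ℓ v).length)
    (hL : LeftMax E ℓ Q x i (v :: P) ∨ ¬ (leftext E ℓ i (v :: P)).Subsingleton) :
    x = 0 ∨ i = 0 ∨ Q[x - 1]? ≠ (ℓ v)[i - 1]? := by
  rcases Nat.eq_zero_or_pos i with hi0 | hi0
  · exact Or.inr (Or.inl hi0)
  have hext := leftext_cons_of_pos (E := E) (ℓ := ℓ) (v := v) (P := P) hi0
  rcases hL.resolve_right (not_not.mpr (hext ▸ subsingleton_setOf_eq_some _)) with hx | hQ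
  · exact Or.inl hx
  · have hget : (ℓ v)[i - 1]? = some (ℓ v)[i - 1] := List.getElem?_eq_getElem (by omega)
    exact Or.inr (Or.inr (hget ▸ hQ _ (hext ▸ hget)))

theorem nodeRightMaximal_of_graphMEM {P : List V} {w : V} (hw : P.getLast? = some w)
    (hj : j < (ℓ w).length)
    (hR : RightMax E ℓ Q y P j ∨ ¬ (rightext E ℓ P j).Subsingleton) :
    y + 1 = Q.length ∨ j + 1 = (ℓ w).length ∨ Q[y + 1]? ≠ (ℓ w)[j + 1]? := by
  rcases (Nat.succ_le_of_lt hj).eq_or_lt with hj' | hj'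
  · exact Or.inr (Or.inl hj')
  have hext := rightext_of_getLast?_eq (E := E) hw hj'
  rcases hR.resolve_right (not_not.mpr (hext ▸ subsingleton_setOf_eq_some _)) with hy | hQ
  · exact Or.inl hy
  · have hget : (ℓ w)[j + 1]? = some (ℓ w)[j + 1] := List.getElem?_eq_getElem hj'
    exact Or.inr (Or.inr (hget ▸ hQ _ (hext ▸ hget)))

end Maximality

theorem graphMEM_decomposes_into_perfect_chain_of_nodeMEMs_general [Inhabited V]
    (E : V → V → Prop) (ℓ : V → List α) (Q : List α)
    (hlab : ∀ v, ℓ v ≠ [])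
    (x y i j : ℕ) (vs : List V)
    (hMEM : IsGraphMEM E ℓ Q x y i vs j) :
    ∃ pos : Fin (vs.length + 1) → ℕ, StrictMono pos ∧
      pos 0 = x ∧ pos (Fin.last vs.length) = y + 1 ∧
      ∀ l : Fin vs.length,
        IsNodeMEM Q ℓ (pos l.castSucc) (pos l.succ - 1)
          (if (l : ℕ) = 0 then i else 0) (vs.get l)
          (if (l : ℕ) = vs.length - 1 then j else (ℓ (vs.get l)).length - 1) := by
  obtain ⟨⟨hne, -, hi, hj, hxy, hy, hspell⟩, hL, hR⟩ := hMEM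
  obtain ⟨v, t, rfl⟩ := List.exists_cons_of_ne_nil hne
  have hw : (v :: t).getLast? = some ((v :: t).getLast (List.cons_ne_nil v t)) :=
    List.getLast?_eq_some_getLast _
  rw [List.getLastD_eq_getLast?, hw, Option.getD_some] at hj
  obtain ⟨pos, ⟨hmono, hpieces⟩, h0, hlast⟩ :=
    exists_isNodeMatchChain_of_eq_spell hlab hy t v x i hi hj hxy hspell
  refine ⟨pos, hmono, h0, hlast, fun l => (hpieces l).isNodeMEM ?_ ?_⟩
  · split_ifs with hl
    · obtain rfl : l = 0 := Fin.ext hl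
      simpa [h0] using nodeLeftMaximal_of_graphMEM hi hL
    · exact Or.inr (Or.inl rfl)
  · split_ifs with hl
    · obtain rfl : l = Fin.last t.length := Fin.ext (by simpa using hl)
      rw [show (Fin.last t.length).succ = Fin.last (v :: t).length from Fin.succ_last _, hlast,
        Nat.add_sub_cancel]
      simpa [List.getLast_eq_getElem] using nodeRightMaximal_of_graphMEM hw hj hR
    · have := List.length_pos_iff.mpr (hlab ((v :: t).get l))
      exact Or.inr (Or.inl (by omega))

/-- Every graph MEM `([x..y], (i, P, j))` with `P = v₁ ⋯ v_p` decomposes into a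
perfect chain of node MEMs: there are positions `x = pos₀ < pos₁ < ⋯ < pos_p = y + 1`
such that the `l`-th piece `[pos_l .. pos_{l+1} - 1]` of `Q` is a node MEM of
`v_{l+1}`, starting at offset `i` in the first node and `0` in the others, and
ending at the label end in all but the last node, which ends at `j`. -/
theorem graphMEM_decomposes_into_perfect_chain_of_nodeMEMs [Inhabited V]
    (E : V → V → Prop) (ℓ : V → List α) (Q : List α)
    (hdag : IsDAG E) (hlab : ∀ v, ℓ v ≠ [])
    (x y i j : ℕ) (vs : List V)
    (hMEM : IsGraphMEM E ℓ Q x y i vs j) :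
    ∃ pos : Fin (vs.length + 1) → ℕ, StrictMono pos ∧
      pos 0 = x ∧ pos (Fin.last vs.length) = y + 1 ∧
      ∀ l : Fin vs.length,
        IsNodeMEM Q ℓ (pos l.castSucc) (pos l.succ - 1)
          (if (l : ℕ) = 0 then i else 0) (vs.get l)
          (if (l : ℕ) = vs.length - 1 then j else (ℓ (vs.get l)).length - 1) :=
  graphMEM_decomposes_into_perfect_chain_of_nodeMEMs_general E ℓ Q hlab x y i j vs hMEM
end

section
/- Let A' = (x_1,i_1,κ_1) < (x_2,i_2,κ_2) < ... < (x_{N'},i_{N'},κ_{N'}) be a chain of exact matches between strings Q and T (so x_l ≤ x_{l+1} and i_l ≤ i_{l+1} for all l). Then coverage(A') = Σ_{l=1}^{N'} min( min(i_{l+1}, i_l+κ_l) - i_l, min(x_{l+1}, x_l+κ_l) - x_l ) (with (x_{N'+1},i_{N'+1}) = (∞,∞)) is the length of a common subsequence of Q and T. That is, there exists a common subsequence of Q and T of length coverage(A'). -/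
variable {α : Type*}

/-- The coverage contribution of anchor `l` in a chain `f` of `N'` anchors:
`min(min(i_{l+1}, i_l + κ_l) - i_l, min(x_{l+1}, x_l + κ_l) - x_l)`, where the
sentinel anchor `(∞, ∞, 0)` is appended (so the last term is `κ_{N'}`). -/
def covTerm (N' : ℕ) (f : Fin N' → ℕ × ℕ × ℕ) (l : Fin N') : ℕ :=
  let x := (f l).1
  let i := (f l).2.1
  let κ := (f l).2.2
  let nx := if h : (l : ℕ) + 1 < N' then (f ⟨l + 1, h⟩).1 else x + κ
  let ni := if h : (l : ℕ) + 1 < N' then (f ⟨l + 1, h⟩).2.1 else i + κ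
  min (min ni (i + κ) - i) (min nx (x + κ) - x)

/-- The coverage of a chain of anchors. -/
def chainCoverage (N' : ℕ) (f : Fin N' → ℕ × ℕ × ℕ) : ℕ :=
  ∑ l : Fin N', covTerm N' f l

lemma covTerm_succ (n : ℕ) (f : Fin (n+1) → ℕ × ℕ × ℕ) (l : Fin n) :
    covTerm (n+1) f l.succ = covTerm n (f ∘ Fin.succ) l := by
  simp only [covTerm, Function.comp_apply, Fin.val_succ, Fin.succ_mk]
  by_cases h : (l : ℕ) + 1 < n
  · rw [dif_pos (show (l : ℕ) + 1 + 1 < n + 1 by omega), dif_pos h,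
      dif_pos (show (l : ℕ) + 1 + 1 < n + 1 by omega), dif_pos h]
  · rw [dif_neg (show ¬((l : ℕ) + 1 + 1 < n + 1) by omega), dif_neg h,
      dif_neg (show ¬((l : ℕ) + 1 + 1 < n + 1) by omega), dif_neg h]

lemma covTerm_le_kappa (N' : ℕ) (f : Fin N' → ℕ × ℕ × ℕ) (l : Fin N') :
    covTerm N' f l ≤ (f l).2.2 := by
  simp only [covTerm]
  split <;> omega

lemma covTerm_add_le (N' : ℕ) (f : Fin N' → ℕ × ℕ × ℕ) (l : Fin N')
    (h : (l : ℕ) + 1 < N') :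
    (f l).1 + covTerm N' f l ≤ max (f l).1 (f ⟨(l : ℕ) + 1, h⟩).1 ∧
    (f l).2.1 + covTerm N' f l ≤ max (f l).2.1 (f ⟨(l : ℕ) + 1, h⟩).2.1 := by
  simp only [covTerm]
  rw [dif_pos h, dif_pos h]
  omega

lemma chainCoverage_succ (n : ℕ) (f : Fin (n+1) → ℕ × ℕ × ℕ) :
    chainCoverage (n+1) f = covTerm (n+1) f 0 + chainCoverage n (f ∘ Fin.succ) := by
  unfold chainCoverage
  rw [Fin.sum_univ_succ]
  congr 1
  exact Finset.sum_congr rfl fun l _ => covTerm_succ n f l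

lemma aux_common (Q T : List α) : ∀ (N' : ℕ) (f : Fin N' → ℕ × ℕ × ℕ),
    (∀ l, IsExactMatch Q T (f l).1 (f l).2.1 (f l).2.2) →
    (Monotone fun l => (f l).1) → (Monotone fun l => (f l).2.1) →
    ∀ b b' : ℕ, (∀ m, b ≤ (f m).1) → (∀ m, b' ≤ (f m).2.1) →
    ∃ ys js : Fin (chainCoverage N' f) → ℕ,
      IsCommonSubseq Q T (chainCoverage N' f) ys js ∧
      ∀ l, b ≤ ys l ∧ b' ≤ js l := by
  intro N'
  induction N' with
  | zero =>
    intro f _ _ _ b b' _ _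
    have hc : chainCoverage 0 f = 0 := rfl
    refine ⟨fun k => 0, fun k => 0, ⟨?_, ?_, ?_⟩, ?_⟩ <;>
      · intro k
        rw [hc] at k
        exact k.elim0
  | succ n ih =>
    intro f hmatch hx hi b b' hb hb'
    have hc0κ : covTerm (n+1) f 0 ≤ (f 0).2.2 := covTerm_le_kappa (n+1) f 0
    -- bounds for the tail
    have hkey : ∀ m : Fin n, (f 0).1 + covTerm (n+1) f 0 ≤ (f (Fin.succ m)).1 ∧
        (f 0).2.1 + covTerm (n+1) f 0 ≤ (f (Fin.succ m)).2.1 := by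
      intro m
      have hn : ((0 : Fin (n+1)) : ℕ) + 1 < n + 1 := by
        have := m.isLt; simp only [Fin.val_zero]; omega
      have hadd := covTerm_add_le (n+1) f 0 hn
      have hx1 : (f 0).1 ≤ (f ⟨((0 : Fin (n+1)) : ℕ) + 1, hn⟩).1 :=
        hx (by rw [Fin.le_def]; simp)
      have hi1 : (f 0).2.1 ≤ (f ⟨((0 : Fin (n+1)) : ℕ) + 1, hn⟩).2.1 :=
        hi (by rw [Fin.le_def]; simp)
      have hle : (⟨((0 : Fin (n+1)) : ℕ) + 1, hn⟩ : Fin (n+1)) ≤ Fin.succ m := by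
        rw [Fin.le_def]; simp
      have hmx : (f ⟨((0 : Fin (n+1)) : ℕ) + 1, hn⟩).1 ≤ (f (Fin.succ m)).1 := hx hle
      have hmi : (f ⟨((0 : Fin (n+1)) : ℕ) + 1, hn⟩).2.1 ≤ (f (Fin.succ m)).2.1 := hi hle
      omega
    obtain ⟨ys', js', ⟨hys'm, hjs'm, hys'ok⟩, hbd'⟩ :=
      ih (f ∘ Fin.succ) (fun l => hmatch l.succ)
        (fun a b hab => hx (show a.succ ≤ b.succ by
          rw [Fin.le_def, Fin.val_succ, Fin.val_succ]; exact Nat.succ_le_succ hab))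
        (fun a b hab => hi (show a.succ ≤ b.succ by
          rw [Fin.le_def, Fin.val_succ, Fin.val_succ]; exact Nat.succ_le_succ hab))
        ((f 0).1 + covTerm (n+1) f 0) ((f 0).2.1 + covTerm (n+1) f 0)
        (fun m => (hkey m).1) (fun m => (hkey m).2)
    have hc : chainCoverage (n+1) f = covTerm (n+1) f 0 + chainCoverage n (f ∘ Fin.succ) :=
      chainCoverage_succ n f
    refine ⟨fun k => if h : (k : ℕ) < covTerm (n+1) f 0 then (f 0).1 + (k : ℕ)
        else ys' ⟨(k : ℕ) - covTerm (n+1) f 0, by have := k.isLt; omega⟩,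
      fun k => if h : (k : ℕ) < covTerm (n+1) f 0 then (f 0).2.1 + (k : ℕ)
        else js' ⟨(k : ℕ) - covTerm (n+1) f 0, by have := k.isLt; omega⟩, ⟨?_, ?_, ?_⟩, ?_⟩
    · intro k k' hkk'
      have hkk : (k : ℕ) < (k' : ℕ) := hkk'
      dsimp only
      rcases Nat.lt_or_ge (k : ℕ) (covTerm (n+1) f 0) with h1 | h1 <;>
        rcases Nat.lt_or_ge (k' : ℕ) (covTerm (n+1) f 0) with h2 | h2
      · rw [dif_pos h1, dif_pos h2]; omega
      · rw [dif_pos h1, dif_neg (by omega)]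
        have := (hbd' ⟨(k' : ℕ) - covTerm (n+1) f 0, by have := k'.isLt; omega⟩).1
        omega
      · omega
      · rw [dif_neg (by omega), dif_neg (by omega)]
        exact hys'm (Fin.mk_lt_mk.mpr (by omega))
    · intro k k' hkk'
      have hkk : (k : ℕ) < (k' : ℕ) := hkk'
      dsimp only
      rcases Nat.lt_or_ge (k : ℕ) (covTerm (n+1) f 0) with h1 | h1 <;>
        rcases Nat.lt_or_ge (k' : ℕ) (covTerm (n+1) f 0) with h2 | h2
      · rw [dif_pos h1, dif_pos h2]; omega
      · rw [dif_pos h1, dif_neg (by omega)]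
        have := (hbd' ⟨(k' : ℕ) - covTerm (n+1) f 0, by have := k'.isLt; omega⟩).2
        omega
      · omega
      · rw [dif_neg (by omega), dif_neg (by omega)]
        exact hjs'm (Fin.mk_lt_mk.mpr (by omega))
    · intro k
      dsimp only
      rcases Nat.lt_or_ge (k : ℕ) (covTerm (n+1) f 0) with h1 | h1
      · rw [dif_pos h1, dif_pos h1]
        obtain ⟨hκpos, hQ, hT, heq⟩ := hmatch 0
        exact ⟨by omega, by omega, heq (k : ℕ) (by omega)⟩
      · rw [dif_neg (by omega), dif_neg (by omega)]
        exact hys'ok _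
    · intro k
      dsimp only
      rcases Nat.lt_or_ge (k : ℕ) (covTerm (n+1) f 0) with h1 | h1
      · rw [dif_pos h1, dif_pos h1]
        exact ⟨by have := hb 0; omega, by have := hb' 0; omega⟩
      · rw [dif_neg (by omega), dif_neg (by omega)]
        have h2 := hbd' ⟨(k : ℕ) - covTerm (n+1) f 0, by have := k.isLt; omega⟩
        exact ⟨by have := hb 0; omega, by have := hb' 0; omega⟩

/-- The coverage of a chain of exact matches (non-decreasing in both coordinates)
is the length of a common subsequence of `Q` and `T`. -/
theorem coverage_is_common_subseq_length (Q T : List α) (N' : ℕ)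
    (f : Fin N' → ℕ × ℕ × ℕ)
    (hmatch : ∀ l, IsExactMatch Q T (f l).1 (f l).2.1 (f l).2.2)
    (hx : Monotone fun l => (f l).1) (hi : Monotone fun l => (f l).2.1) :
    ∃ ys js : Fin (chainCoverage N' f) → ℕ,
      IsCommonSubseq Q T (chainCoverage N' f) ys js := by
  obtain ⟨ys, js, h, _⟩ := aux_common Q T N' f hmatch hx hi 0 0
    (fun _ => Nat.zero_le _) (fun _ => Nat.zero_le _)
  exact ⟨ys, js, h⟩
end

section
/- Let Q and T be strings. The maximum coverage over all weak chains of MEMs between Q and T is at most the length of the LCS of Q and T, and by Theorem (anchor-restricted LCS = LCS for MEM anchors) it equals the LCS length. Formally: max over weak chains A' of MEMs of coverage(A') = |LCS(Q,T)|. -/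
variable {α : Type*}

/-- A weak chain: anchor coordinates strictly increase in both strings. -/
def IsWeakChain (N' : ℕ) (f : Fin N' → ℕ × ℕ × ℕ) : Prop :=
  (StrictMono fun l => (f l).1) ∧ (StrictMono fun l => (f l).2.1)

/-!
Each anchor of a weak chain of MEMs contributes a diagonal run of character matches that stops
before the next anchor starts, so the runs concatenate to a common subsequence whose length is
the coverage. Conversely, take the MEM through the last match of a common subsequence and let
`(x, i)` be its start: the matches `(y, j)` not strictly below `(x, i)` form a chain on which
`max (y - x) (j - i)` strictly increases, so there are at most as many of them as the MEM
contributes, and the matches strictly below `(x, i)` are handled recursively with `(x, i)` as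
the sentinel.
-/

def BothLt (p q : ℕ × ℕ) : Prop :=
  p.1 < q.1 ∧ p.2 < q.2

instance : DecidableRel BothLt := fun _ _ => instDecidableAnd

theorem BothLt.le {p q : ℕ × ℕ} (h : BothLt p q) : p ≤ q :=
  ⟨h.1.le, h.2.le⟩

theorem BothLt.trans_le {p q r : ℕ × ℕ} (h : BothLt p q) (h' : q ≤ r) : BothLt p r :=
  ⟨h.1.trans_le h'.1, h.2.trans_le h'.2⟩

theorem le_of_mem_of_pairwise_append_singleton {L : List (ℕ × ℕ)} {p r : ℕ × ℕ}
    (hL : (L ++ [p]).Pairwise BothLt) (hr : r ∈ L ++ [p]) : r ≤ p := by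
  rcases List.mem_append.1 hr with hr | hr
  · exact ((List.pairwise_append.1 hL).2.2 r hr p (List.mem_singleton_self p)).le
  · rw [List.mem_singleton.1 hr]

def start (a : ℕ × ℕ × ℕ) : ℕ × ℕ :=
  (a.1, a.2.1)

def IsMatch (Q T : List α) (p : ℕ × ℕ) : Prop :=
  p.1 < Q.length ∧ p.2 < T.length ∧ Q[p.1]? = T[p.2]?

section MEM

variable {Q T : List α} {x i κ y j : ℕ}

theorem IsExactMatch.extend_left (h : IsExactMatch Q T x i κ) (hx : 0 < x) (hi : 0 < i)
    (heq : Q[x - 1]? = T[i - 1]?) : IsExactMatch Q T (x - 1) (i - 1) (κ + 1) := by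
  obtain ⟨-, hxQ, hiT, hm⟩ := h
  refine ⟨by omega, by omega, by omega, fun d hd => ?_⟩
  rcases d with _ | d
  · simpa using heq
  · have hx' : x - 1 + (d + 1) = x + d := by omega
    have hi' : i - 1 + (d + 1) = i + d := by omega
    rw [hx', hi']
    exact hm d (by omega)

theorem IsExactMatch.extend_right (h : IsExactMatch Q T x i κ) (hx : x + κ < Q.length)
    (hi : i + κ < T.length) (heq : Q[x + κ]? = T[i + κ]?) : IsExactMatch Q T x i (κ + 1) := by
  obtain ⟨-, -, -, hm⟩ := h
  refine ⟨by omega, by omega, by omega, fun d hd => ?_⟩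
  rcases Nat.lt_or_ge d κ with hdκ | hdκ
  · exact hm d hdκ
  · obtain rfl : d = κ := by omega
    exact heq

/-- Extend the match to the left and to the right for as long as the characters agree. -/
theorem IsExactMatch.exists_isMEM_supports {x i κ : ℕ} (h : IsExactMatch Q T x i κ)
    (hs : Supports x i κ y j) : ∃ x' i' κ', IsMEM Q T x' i' κ' ∧ Supports x' i' κ' y j := by
  by_cases hl : x = 0 ∨ i = 0 ∨ Q[x - 1]? ≠ T[i - 1]?
  · by_cases hr : x + κ = Q.length ∨ i + κ = T.length ∨ Q[x + κ]? ≠ T[i + κ]?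
    · exact ⟨x, i, κ, ⟨h, hl, hr⟩, hs⟩
    · push Not at hr
      have := h.2.1
      have := h.2.2.1
      exact (h.extend_right (by omega) (by omega) hr.2.2).exists_isMEM_supports
        (by unfold Supports at hs ⊢; omega)
  · push Not at hl
    exact (h.extend_left (by omega) (by omega) hl.2.2).exists_isMEM_supports
      (by unfold Supports at hs ⊢; omega)
termination_by Q.length - κ
decreasing_by all_goals have := h.2.1; omega

theorem IsMatch.exists_isMEM_supports {p : ℕ × ℕ} (h : IsMatch Q T p) :
    ∃ x i κ, IsMEM Q T x i κ ∧ Supports x i κ p.1 p.2 := by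
  obtain ⟨hy, hj, heq⟩ := h
  exact IsExactMatch.exists_isMEM_supports (κ := 1)
    ⟨le_rfl, hy, hj, fun d hd => by simpa [show d = 0 by omega] using heq⟩
    (by unfold Supports; omega)

end MEM

section Coverage

open Function

/-- The contribution of anchor `a` to the coverage when the next anchor starts at `n`. -/
def coverSpan (a : ℕ × ℕ × ℕ) (n : ℕ × ℕ) : ℕ :=
  min (min n.2 (a.2.1 + a.2.2) - a.2.1) (min n.1 (a.1 + a.2.2) - a.1)

def nextStart (sentinel : ℕ × ℕ) : List (ℕ × ℕ × ℕ) → ℕ × ℕ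
  | [] => sentinel
  | b :: _ => start b

/-- Coverage of a list of anchors followed by a sentinel anchor starting at `sentinel`. -/
def listCoverage (sentinel : ℕ × ℕ) : List (ℕ × ℕ × ℕ) → ℕ
  | [] => 0
  | a :: r => coverSpan a (nextStart sentinel r) + listCoverage sentinel r

theorem nextStart_append_singleton (sentinel : ℕ × ℕ) (a : ℕ × ℕ × ℕ) :
    ∀ C, nextStart sentinel (C ++ [a]) = nextStart (start a) C
  | [] | _ :: _ => rfl

theorem listCoverage_append_singleton (sentinel : ℕ × ℕ) (a : ℕ × ℕ × ℕ) (C : List (ℕ × ℕ × ℕ)) :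
    listCoverage sentinel (C ++ [a]) = listCoverage (start a) C + coverSpan a sentinel := by
  induction C with
  | nil => simp [listCoverage, nextStart]
  | cons b r ih =>
    rw [List.cons_append, listCoverage, listCoverage, ih, nextStart_append_singleton]
    omega

theorem covTerm_succ_s9 {N : ℕ} (f : Fin (N + 1) → ℕ × ℕ × ℕ) (l : Fin N) :
    covTerm (N + 1) f l.succ = covTerm N (fun k => f k.succ) l := by
  simp only [covTerm, Fin.val_succ, Nat.add_lt_add_iff_right]
  rfl

theorem covTerm_zero {N : ℕ} (f : Fin (N + 1) → ℕ × ℕ × ℕ) (sentinel : ℕ × ℕ)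
    (hsentinel : (f 0).1 + (f 0).2.2 ≤ sentinel.1 ∧ (f 0).2.1 + (f 0).2.2 ≤ sentinel.2) :
    covTerm (N + 1) f 0 = coverSpan (f 0) (nextStart sentinel (List.ofFn fun k => f k.succ)) := by
  cases N with
  | zero =>
    simp [covTerm, coverSpan, nextStart, min_eq_right hsentinel.1, min_eq_right hsentinel.2]
  | succ N => simp [covTerm, coverSpan, nextStart, start, List.ofFn_succ]

theorem chainCoverage_eq_listCoverage {N : ℕ} (f : Fin N → ℕ × ℕ × ℕ) (sentinel : ℕ × ℕ)
    (hsentinel : ∀ l, (f l).1 + (f l).2.2 ≤ sentinel.1 ∧ (f l).2.1 + (f l).2.2 ≤ sentinel.2) :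
    chainCoverage N f = listCoverage sentinel (List.ofFn f) := by
  induction N with
  | zero => rfl
  | succ N ih =>
    rw [chainCoverage, Fin.sum_univ_succ, List.ofFn_succ, listCoverage,
      covTerm_zero f sentinel (hsentinel 0), ← ih (fun k => f k.succ) (fun l => hsentinel l.succ)]
    simp only [covTerm_succ_s9, chainCoverage]

theorem isWeakChain_iff_pairwise {N : ℕ} (f : Fin N → ℕ × ℕ × ℕ) :
    IsWeakChain N f ↔ (List.ofFn f).Pairwise (BothLt on start) := by
  simp only [IsWeakChain, StrictMono, List.pairwise_ofFn, Function.onFun, BothLt, start]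
  exact ⟨fun h _ _ hab => ⟨h.1 hab, h.2 hab⟩,
    fun h => ⟨fun _ _ hab => (h hab).1, fun _ _ hab => (h hab).2⟩⟩

theorem exists_chain_iff {Q T : List α} {c : ℕ} :
    (∃ (N : ℕ) (f : Fin N → ℕ × ℕ × ℕ), (∀ l, IsMEM Q T (f l).1 (f l).2.1 (f l).2.2) ∧
        IsWeakChain N f ∧ chainCoverage N f = c) ↔
      ∃ C : List (ℕ × ℕ × ℕ), (∀ a ∈ C, IsMEM Q T a.1 a.2.1 a.2.2) ∧
        C.Pairwise (BothLt on start) ∧ listCoverage (Q.length, T.length) C = c := by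
  have ends {N : ℕ} {f : Fin N → ℕ × ℕ × ℕ} (hf : ∀ l, IsMEM Q T (f l).1 (f l).2.1 (f l).2.2) :
      chainCoverage N f = listCoverage (Q.length, T.length) (List.ofFn f) :=
    chainCoverage_eq_listCoverage f _ fun l => ⟨(hf l).1.2.1, (hf l).1.2.2.1⟩
  constructor
  · rintro ⟨N, f, hf, hchain, rfl⟩
    exact ⟨List.ofFn f, List.forall_mem_ofFn_iff.2 hf, (isWeakChain_iff_pairwise f).1 hchain,
      (ends hf).symm⟩
  · rintro ⟨C, hC, hchain, rfl⟩
    have hf : ∀ l, IsMEM Q T (C.get l).1 (C.get l).2.1 (C.get l).2.2 :=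
      fun l => hC _ (List.get_mem _ _)
    refine ⟨C.length, C.get, hf, ?_, ?_⟩
    · rwa [isWeakChain_iff_pairwise, List.ofFn_get]
    · rw [ends hf, List.ofFn_get]

theorem exists_commonSubseq_iff {Q T : List α} {c : ℕ} :
    (∃ ys js : Fin c → ℕ, IsCommonSubseq Q T c ys js) ↔
      ∃ L : List (ℕ × ℕ), L.length = c ∧ L.Pairwise BothLt ∧ ∀ p ∈ L, IsMatch Q T p := by
  constructor
  · rintro ⟨ys, js, hys, hjs, hm⟩
    exact ⟨List.ofFn fun l => (ys l, js l), List.length_ofFn,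
      List.pairwise_ofFn.2 fun _ _ h => ⟨hys h, hjs h⟩, List.forall_mem_ofFn_iff.2 hm⟩
  · rintro ⟨L, rfl, hL, hm⟩
    exact ⟨fun l => (L.get l).1, fun l => (L.get l).2,
      fun _ _ h => (List.pairwise_iff_get.1 hL _ _ h).1,
      fun _ _ h => (List.pairwise_iff_get.1 hL _ _ h).2, fun l => hm _ (List.get_mem _ _)⟩

end Coverage

section Cells

open Function

def diagCells (a : ℕ × ℕ × ℕ) (n : ℕ) : List (ℕ × ℕ) :=
  (List.range n).map fun d => (a.1 + d, a.2.1 + d)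

/-- The character matches counted by `listCoverage sentinel C`. -/
def coveredCells (sentinel : ℕ × ℕ) : List (ℕ × ℕ × ℕ) → List (ℕ × ℕ)
  | [] => []
  | a :: r => diagCells a (coverSpan a (nextStart sentinel r)) ++ coveredCells sentinel r

theorem length_coveredCells (sentinel : ℕ × ℕ) (C : List (ℕ × ℕ × ℕ)) :
    (coveredCells sentinel C).length = listCoverage sentinel C := by
  induction C with
  | nil => rfl
  | cons a r ih => simp [coveredCells, listCoverage, diagCells, ih]

theorem pairwise_diagCells (a : ℕ × ℕ × ℕ) (n : ℕ) : (diagCells a n).Pairwise BothLt :=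
  List.pairwise_map.2 <| List.pairwise_lt_range.imp fun h => ⟨by omega, by omega⟩

theorem start_le_of_mem_diagCells {a : ℕ × ℕ × ℕ} {n : ℕ} {p : ℕ × ℕ}
    (hp : p ∈ diagCells a n) : start a ≤ p := by
  obtain ⟨d, -, rfl⟩ := List.mem_map.1 hp
  exact ⟨Nat.le_add_right _ _, Nat.le_add_right _ _⟩

theorem mem_diagCells_coverSpan {a : ℕ × ℕ × ℕ} {n p : ℕ × ℕ}
    (hp : p ∈ diagCells a (coverSpan a n)) :
    ∃ d < a.2.2, p = (a.1 + d, a.2.1 + d) ∧ BothLt p n := by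
  obtain ⟨d, hd, rfl⟩ := List.mem_map.1 hp
  rw [List.mem_range, coverSpan] at hd
  exact ⟨d, by omega, rfl, by unfold BothLt; omega⟩

theorem start_le_of_mem_coveredCells {sentinel : ℕ × ℕ} {a : ℕ × ℕ × ℕ} {r : List (ℕ × ℕ × ℕ)}
    (hC : (a :: r).Pairwise (BothLt on start)) {p : ℕ × ℕ}
    (hp : p ∈ coveredCells sentinel (a :: r)) : start a ≤ p := by
  induction r generalizing a with
  | nil => simpa [coveredCells] using start_le_of_mem_diagCells (by simpa [coveredCells] using hp)
  | cons b r ih =>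
    rcases List.mem_append.1 hp with hp | hp
    · exact start_le_of_mem_diagCells hp
    · exact (List.rel_of_pairwise_cons hC List.mem_cons_self).le.trans (ih hC.of_cons hp)

theorem pairwise_coveredCells (sentinel : ℕ × ℕ) {C : List (ℕ × ℕ × ℕ)}
    (hC : C.Pairwise (BothLt on start)) : (coveredCells sentinel C).Pairwise BothLt := by
  induction C with
  | nil => exact .nil
  | cons a r ih =>
    refine List.pairwise_append.2 ⟨pairwise_diagCells _ _, ih hC.of_cons, fun p hp q hq => ?_⟩
    obtain ⟨-, -, -, hpn⟩ := mem_diagCells_coverSpan hp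
    cases r with
    | nil => simp [coveredCells] at hq
    | cons b r => exact hpn.trans_le (start_le_of_mem_coveredCells hC.of_cons hq)

theorem isMatch_of_mem_coveredCells {Q T : List α} {sentinel : ℕ × ℕ} {C : List (ℕ × ℕ × ℕ)}
    (hC : ∀ a ∈ C, IsExactMatch Q T a.1 a.2.1 a.2.2) {p : ℕ × ℕ}
    (hp : p ∈ coveredCells sentinel C) : IsMatch Q T p := by
  induction C with
  | nil => simp [coveredCells] at hp
  | cons a r ih =>
    rcases List.mem_append.1 hp with hp | hp
    · obtain ⟨d, hd, rfl, -⟩ := mem_diagCells_coverSpan hp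
      obtain ⟨-, hxQ, hiT, hm⟩ := hC a List.mem_cons_self
      exact ⟨by dsimp only; omega, by dsimp only; omega, hm d hd⟩
    · exact ih (fun b hb => hC b (List.mem_cons_of_mem _ hb)) hp

end Cells

section Chains

open Function

theorem length_le_of_pairwise_lt_of_forall_lt {l : List ℕ} {m : ℕ} (hl : l.Pairwise (· < ·))
    (hm : ∀ v ∈ l, v < m) : l.length ≤ m := by
  have hsub : l.toFinset ⊆ Finset.range m := fun v hv =>
    Finset.mem_range.2 (hm v (List.mem_toFinset.1 hv))
  simpa [List.toFinset_card_of_nodup hl.nodup] using Finset.card_le_card hsub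

/-- The map `r ↦ max (r.1 - u.1) (r.2 - u.2)` strictly increases along `L`. -/
theorem length_le_of_pairwise_bothLt {L : List (ℕ × ℕ)} {u p : ℕ × ℕ}
    (hL : L.Pairwise BothLt) (hu : ∀ r ∈ L, ¬BothLt r u) (hp : ∀ r ∈ L, r ≤ p) :
    L.length ≤ max (p.1 - u.1) (p.2 - u.2) + 1 := by
  have hmono : (L.map fun r => max (r.1 - u.1) (r.2 - u.2)).Pairwise (· < ·) :=
    List.pairwise_map.2 <| hL.imp_of_mem fun hr _ hrs => by
      have := hu _ hr
      simp only [BothLt] at this hrs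
      omega
  refine (List.length_map _).symm.trans_le (length_le_of_pairwise_lt_of_forall_lt hmono ?_)
  simp only [List.mem_map]
  rintro _ ⟨r, hr, rfl⟩
  have := hp r hr
  simp only [Prod.le_def] at this
  omega

theorem exists_chain_of_commonSubseq {Q T : List α} (L : List (ℕ × ℕ)) (hL : L.Pairwise BothLt)
    (hm : ∀ p ∈ L, IsMatch Q T p) (sentinel : ℕ × ℕ) (hsentinel : ∀ p ∈ L, BothLt p sentinel) :
    ∃ C : List (ℕ × ℕ × ℕ), (∀ a ∈ C, IsMEM Q T a.1 a.2.1 a.2.2) ∧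
      C.Pairwise (BothLt on start) ∧ (∀ a ∈ C, BothLt (start a) sentinel) ∧
      L.length ≤ listCoverage sentinel C := by
  induction hn : L.length using Nat.strong_induction_on generalizing L sentinel with
  | _ n ih =>
  obtain rfl | ⟨L, p, rfl⟩ := L.eq_nil_or_concat
  · exact ⟨[], by simp, .nil, by simp, by simp [← hn]⟩
  rw [List.concat_eq_append] at *
  obtain ⟨x, i, κ, hM, hsupp⟩ := (hm p (by simp)).exists_isMEM_supports
  have hMsentinel : BothLt (x, i) sentinel := by
    have := hsentinel p (by simp)
    simp only [Supports, BothLt] at hsupp this ⊢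
    omega
  have hsplit := List.length_eq_length_filter_add (l := L ++ [p]) fun r => BothLt r (x, i)
  have hcount : _ ≤ max (p.1 - x) (p.2 - i) + 1 :=
    length_le_of_pairwise_bothLt (hL.filter fun r => !BothLt r (x, i))
      (fun r hr => by simpa using (List.mem_filter.1 hr).2)
      fun r hr => le_of_mem_of_pairwise_append_singleton hL (List.mem_of_mem_filter hr)
  have hp_above : p ∈ (L ++ [p]).filter fun r => !BothLt r (x, i) := by
    have : ¬BothLt p (x, i) := fun h => by
      simp only [Supports, BothLt] at hsupp h
      omega
    simp [List.mem_filter, this]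
  have hspan : max (p.1 - x) (p.2 - i) + 1 ≤ coverSpan (x, i, κ) sentinel := by
    have := hsentinel p (by simp)
    simp only [Supports, BothLt] at hsupp this
    simp only [coverSpan]
    omega
  obtain ⟨C, hCM, hC, hCsentinel, hcov⟩ :=
    ih _ (by have := List.length_pos_of_mem hp_above; omega)
      ((L ++ [p]).filter fun r => BothLt r (x, i)) (hL.filter _)
      (fun r hr => hm r (List.mem_of_mem_filter hr)) (x, i)
      (fun r hr => by simpa using (List.mem_filter.1 hr).2) rfl
  refine ⟨C ++ [(x, i, κ)], ?_, ?_, ?_, ?_⟩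
  · simpa [or_imp, forall_and] using And.intro hCM hM
  · simpa [List.pairwise_append, Function.onFun, start] using And.intro hC hCsentinel
  · simpa [or_imp, forall_and, start] using
      And.intro (fun a ha => (hCsentinel a ha).trans_le hMsentinel.le) hMsentinel
  · rw [listCoverage_append_singleton]
    exact hn ▸ hsplit.trans_le (Nat.add_le_add hcov (hcount.trans hspan))

end Chains

/-- The maximum coverage over all weak chains of MEMs between `Q` and `T` equals
the length of a longest common subsequence of `Q` and `T`. -/
theorem max_coverage_weak_chains_eq_LCS (Q T : List α) :
    sSup {c | ∃ (N' : ℕ) (f : Fin N' → ℕ × ℕ × ℕ),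
        (∀ l, IsMEM Q T (f l).1 (f l).2.1 (f l).2.2) ∧ IsWeakChain N' f ∧
        chainCoverage N' f = c} =
      sSup {c | ∃ ys js : Fin c → ℕ, IsCommonSubseq Q T c ys js} := by
  simp only [exists_chain_iff, exists_commonSubseq_iff]
  apply csSup_eq_csSup_of_forall_exists_le
  · rintro _ ⟨C, hM, hC, rfl⟩
    exact ⟨_, ⟨coveredCells _ C, length_coveredCells _ C, pairwise_coveredCells _ hC,
      fun p hp => isMatch_of_mem_coveredCells (fun a ha => (hM a ha).1) hp⟩, le_rfl⟩
  · rintro _ ⟨L, rfl, hL, hm⟩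
    obtain ⟨C, hM, hC, -, hcov⟩ := exists_chain_of_commonSubseq L hL hm (Q.length, T.length)
      fun p hp => ⟨(hm p hp).1, (hm p hp).2.1⟩
    exact ⟨_, ⟨C, hM, hC, rfl⟩, hcov⟩
end
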